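/- arXiv:2402.01875 — 2 statements merged into one kernel-verified Lean document; each statement's English description precedes it below -/
import Mathlib

section
/- Let S be the symmetric traceless d×d matrices, σ > 0, ρ > 0, and define χ : S × S → S by χ(p, λ) := max{σ, |λ + ρp|_F}·λ − σ·(λ + ρp). Then for λ with |λ|_F ≤ σ, one has χ(p, λ) = 0 if and only if λ : p = σ·|p|_F. -/
noncomputable def frobNorm {d : ℕ} (A : Matrix (Fin d) (Fin d) ℝ) : ℝ :=
  Real.sqrt (∑ i, ∑ j, (A i j) ^ 2)

noncomputable def frobInner {d : ℕ} (A B : Matrix (Fin d) (Fin d) ℝ) : ℝ :=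
  ∑ i, ∑ j, A i j * B i j

/-! Both sides say that `p` is a nonnegative multiple of `λ` and that `λ` lies on the sphere of
radius `σ` unless `p = 0`. For `χ = 0` this is read off from
`σ ρ p = (max σ |λ + ρ p| - σ) λ` and from the norms of `max σ |λ + ρ p| λ = σ (λ + ρ p)`; for
`λ : p = σ |p|` it is the equality case of Cauchy–Schwarz, given `|λ| ≤ σ`. Viewing a matrix as
the Euclidean vector of its entries turns the Frobenius norm and inner product into the Euclidean
ones. -/

open RealInnerProductSpace

section InnerProductSpace

variable {E : Type*} [NormedAddCommGroup E] [InnerProductSpace ℝ E]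

theorem real_inner_eq_norm_mul_iff_sameRay {x y : E} :
    ⟪x, y⟫ = ‖x‖ * ‖y‖ ↔ SameRay ℝ x y :=
  inner_eq_norm_mul_iff_real.trans (eq_comm.trans sameRay_iff_norm_smul_eq.symm)

variable {σ ρ : ℝ} {x y : E}

theorem real_inner_eq_mul_norm_iff (hσ : 0 < σ) (hx : ‖x‖ ≤ σ) :
    ⟪x, y⟫ = σ * ‖y‖ ↔ y = 0 ∨ ‖x‖ = σ ∧ SameRay ℝ x y := by
  rcases eq_or_ne y 0 with rfl | hy
  · simp
  have hy₀ : 0 < ‖y‖ := norm_pos_iff.mpr hy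
  simp only [hy, false_or]
  constructor
  · intro h
    have hσx : σ ≤ ‖x‖ :=
      le_of_mul_le_mul_right (h ▸ real_inner_le_norm x y) hy₀
    have hxσ : ‖x‖ = σ := le_antisymm hx hσx
    exact ⟨hxσ, real_inner_eq_norm_mul_iff_sameRay.mp (hxσ ▸ h)⟩
  · rintro ⟨rfl, hxy⟩
    exact real_inner_eq_norm_mul_iff_sameRay.mpr hxy

theorem chi_eq_zero_iff (hσ : 0 < σ) (hρ : 0 < ρ) (hx : ‖x‖ ≤ σ) :
    max σ ‖x + ρ • y‖ • x - σ • (x + ρ • y) = 0 ↔ y = 0 ∨ ‖x‖ = σ ∧ SameRay ℝ x y := by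
  constructor
  · intro h
    rw [sub_eq_zero] at h
    have hy : (σ * ρ) • y = (max σ ‖x + ρ • y‖ - σ) • x := by
      rw [sub_smul, h, mul_smul, smul_add]
      abel
    rcases max_choice σ ‖x + ρ • y‖ with hN | hN
    · left
      rw [hN, sub_self, zero_smul, smul_eq_zero] at hy
      exact hy.resolve_left (by positivity)
    · right
      have hN₀ : 0 < ‖x + ρ • y‖ := hσ.trans_le (hN ▸ le_max_left _ _)
      have hnorm := congrArg norm h
      rw [hN, norm_smul, norm_smul, Real.norm_of_nonneg hN₀.le, Real.norm_of_nonneg hσ.le,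
        mul_comm σ] at hnorm
      refine ⟨mul_left_cancel₀ hN₀.ne' hnorm, ?_⟩
      have hscale : y = ((σ * ρ)⁻¹ * (max σ ‖x + ρ • y‖ - σ)) • x := by
        rw [mul_smul, ← hy, inv_smul_smul₀ (by positivity)]
      rw [hscale]
      exact SameRay.sameRay_nonneg_smul_right x
        (mul_nonneg (by positivity) (sub_nonneg.mpr (le_max_left _ _)))
  · rintro (rfl | ⟨rfl, hxy⟩)
    · simp [max_eq_left hx]
    · rcases eq_or_ne x 0 with rfl | hx₀
      · simp at hσ
      obtain ⟨t, ht, rfl⟩ := hxy.exists_nonneg_left hx₀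
      have hc : x + ρ • t • x = (1 + ρ * t) • x := by module
      have hc₀ : 0 ≤ ρ * t := by positivity
      rw [hc, norm_smul, Real.norm_of_nonneg (by positivity), max_eq_right (by nlinarith)]
      module

end InnerProductSpace

noncomputable def Matrix.toEuclidean {m n : Type*} :
    Matrix m n ℝ ≃ₗ[ℝ] EuclideanSpace ℝ (m × n) :=
  (LinearEquiv.curry ℝ ℝ m n).symm.trans (WithLp.linearEquiv 2 ℝ (m × n → ℝ)).symm

@[simp]
theorem Matrix.toEuclidean_apply {m n : Type*} (A : Matrix m n ℝ) (ij : m × n) :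
    Matrix.toEuclidean A ij = A ij.1 ij.2 :=
  rfl

theorem frobNorm_eq_norm_toEuclidean {d : ℕ} (A : Matrix (Fin d) (Fin d) ℝ) :
    frobNorm A = ‖A.toEuclidean‖ := by
  simp [EuclideanSpace.norm_eq, frobNorm, Fintype.sum_prod_type]

theorem frobInner_eq_inner_toEuclidean {d : ℕ} (A B : Matrix (Fin d) (Fin d) ℝ) :
    frobInner A B = ⟪A.toEuclidean, B.toEuclidean⟫ := by
  simp [PiLp.inner_apply, frobInner, Fintype.sum_prod_type, mul_comm]

theorem chi_zero_iff_complementarity_general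
    {d : ℕ} (σ ρ : ℝ) (hσ : 0 < σ) (hρ : 0 < ρ)
    (p lam : Matrix (Fin d) (Fin d) ℝ)
    (hbd : frobNorm lam ≤ σ) :
    (max σ (frobNorm (lam + ρ • p)) • lam - σ • (lam + ρ • p) = 0) ↔
      frobInner lam p = σ * frobNorm p := by
  rw [frobNorm_eq_norm_toEuclidean] at hbd
  rw [← Matrix.toEuclidean.map_eq_zero_iff, frobInner_eq_inner_toEuclidean,
    frobNorm_eq_norm_toEuclidean, frobNorm_eq_norm_toEuclidean]
  simp only [map_sub, map_smul, map_add]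
  rw [chi_eq_zero_iff hσ hρ hbd, real_inner_eq_mul_norm_iff hσ hbd]

/-- The semi-smooth Newton reformulation function `χ` vanishes exactly at the
solutions of the complementarity condition. -/
theorem chi_zero_iff_complementarity
    {d : ℕ} (σ ρ : ℝ) (hσ : 0 < σ) (hρ : 0 < ρ)
    (p lam : Matrix (Fin d) (Fin d) ℝ)
    (hp : p.transpose = p ∧ p.trace = 0)
    (hlam : lam.transpose = lam ∧ lam.trace = 0)
    (hbd : frobNorm lam ≤ σ) :
    (max σ (frobNorm (lam + ρ • p)) • lam - σ • (lam + ρ • p) = 0) ↔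
      frobInner lam p = σ * frobNorm p :=
  chi_zero_iff_complementarity_general σ ρ hσ hρ p lam hbd
end

section
/- In the setting of the previous statement with W ⊆ X and Y ⊆ X closed subspaces (not necessarily nested), let u_W, u_Y be the respective Galerkin solutions and define residuals ρ_W(v) := b(v) − a(u_W, v), ρ_Y(v) := b(v) − a(u_Y, v). Then the predicted error reduction satisfies Δe²_{W,Y} := ‖u_X − u_W‖² − ‖u_X − u_Y‖² = ‖u_Y − u_W‖² − 2·ρ_Y(u_W − ũ) for any decomposition u_W = u^loc + ũ with u^loc := u_W − ũ, where ρ_Y vanishes on Y (so the correction term is ρ_Y(u^loc)). -/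
open scoped RealInnerProductSpace

/-- Predicted error reduction formula [P4, Prop. 1]: for Galerkin solutions
`u_W`, `u_Y` in (not necessarily nested) subspaces and any decomposition
`u_W = u_loc + ũ` with `ũ ∈ Y` (so that the residual `ρ_Y` vanishes on `ũ`),
`‖u_X − u_W‖² − ‖u_X − u_Y‖² = ‖u_Y − u_W‖² − 2 ρ_Y(u_loc)`. -/
theorem predicted_error_reduction
    {X : Type*} [NormedAddCommGroup X] [InnerProductSpace ℝ X] [CompleteSpace X]
    (b : X →L[ℝ] ℝ)
    (W Y : Submodule ℝ X) (hWc : IsClosed (W : Set X)) (hYc : IsClosed (Y : Set X))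
    (uX uW uY : X)
    (huX : ∀ v : X, ⟪uX, v⟫ = b v)
    (huW : uW ∈ W) (hgW : ∀ w ∈ W, ⟪uW, w⟫ = b w)
    (huY : uY ∈ Y) (hgY : ∀ y ∈ Y, ⟪uY, y⟫ = b y)
    (ρW ρY : X → ℝ)
    (hρW : ∀ v, ρW v = b v - ⟪uW, v⟫)
    (hρY : ∀ v, ρY v = b v - ⟪uY, v⟫)
    (ut uloc : X) (hdecomp : uW = uloc + ut) (hut : ut ∈ Y) :
    ‖uX - uW‖ ^ 2 - ‖uX - uY‖ ^ 2 = ‖uY - uW‖ ^ 2 - 2 * ρY uloc := by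
  -- Galerkin orthogonality for Y
  have horth : ∀ y ∈ Y, ⟪uX - uY, y⟫ = 0 := by
    intro y hy
    rw [inner_sub_left, huX y, hgY y hy]; ring
  -- residual at uloc equals inner product with error uX - uY
  have hres : ρY uloc = ⟪uX - uY, uW - uY⟫ := by
    have h1 : ⟪uX - uY, ut⟫ = 0 := horth ut hut
    have h2 : ⟪uX - uY, uY⟫ = 0 := horth uY huY
    have h3 : uloc = uW - ut := by rw [hdecomp]; abel
    rw [hρY, h3, ← huX (uW - ut)]
    simp only [inner_sub_left, inner_sub_right] at *
    linarith
  have hexp : ‖uX - uW‖ ^ 2 = ‖uX - uY‖ ^ 2 + 2 * ⟪uX - uY, uY - uW⟫ + ‖uY - uW‖ ^ 2 := by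
    have : uX - uW = (uX - uY) + (uY - uW) := by abel
    rw [this, norm_add_sq_real]
  have hneg : ⟪uX - uY, uW - uY⟫ = -⟪uX - uY, uY - uW⟫ := by
    rw [show uW - uY = -(uY - uW) by abel, inner_neg_right]
  rw [hres, hneg]
  linarith
end
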